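/- arXiv:1009.1769 — 9 statements merged into one kernel-verified Lean document; each statement's English description precedes it below -/
import Mathlib

section
/- Define polynomials S_n(x,y) ∈ ℤ[x,y] by the identity (1-tx)(1-ty) = ∏_{n≥1}(1 - S_n(x,y) t^n) of formal power series. Then for all n ≥ 1, x^n + y^n = ∑_{d | n} d · S_d(x,y)^{n/d}. -/
/-!
Apply the logarithmic derivative `f ↦ -t f'/f` to both sides. For `1 - s t^k` it is
`∑_{j ≥ 1} k s^j t^{kj}`, so the left side gives `∑_{m ≥ 1} (x^m + y^m) t^m` and the product,
truncated at `n`, gives `∑_m (∑_{d ∣ m, d ≤ n} d S_d^{m/d}) t^m`. The truncated product agrees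
with `(1 - tx)(1 - ty)` modulo `t^{n+1}`, and both are units, so their logarithmic derivatives
agree modulo `t^{n+1}` too; compare the coefficients of `t^n`.
-/

open PowerSeries Finset

namespace PowerSeries

variable {R : Type*} [CommRing R]

theorem coeff_X_mul_derivative (f : R⟦X⟧) (m : ℕ) :
    coeff m (X * d⁄dX R f) = m * coeff m f := by
  cases m with
  | zero => simp [coeff_zero_eq_constantCoeff]
  | succ k =>
    rw [coeff_succ_X_mul, coeff_derivative]
    push_cast
    ring

theorem X_pow_dvd_X_mul_derivative {n : ℕ} {f : R⟦X⟧} (h : X ^ n ∣ f) :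
    X ^ n ∣ X * d⁄dX R f := by
  rw [X_pow_dvd_iff] at h ⊢
  intro m hm
  rw [coeff_X_mul_derivative, h m hm, mul_zero]

/-- `L = -t f'/f`, with the denominator cleared. -/
def IsNegLogDeriv (f L : R⟦X⟧) : Prop :=
  L * f = -(X * d⁄dX R f)

theorem IsNegLogDeriv.mul {f g L M : R⟦X⟧} (hf : IsNegLogDeriv f L) (hg : IsNegLogDeriv g M) :
    IsNegLogDeriv (f * g) (L + M) := by
  unfold IsNegLogDeriv at *
  rw [Derivation.leibniz, smul_eq_mul, smul_eq_mul]
  linear_combination g * hf + f * hg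

theorem IsNegLogDeriv.prod {ι : Type*} (s : Finset ι) {f L : ι → R⟦X⟧}
    (h : ∀ i ∈ s, IsNegLogDeriv (f i) (L i)) :
    IsNegLogDeriv (∏ i ∈ s, f i) (∑ i ∈ s, L i) := by
  classical
  induction s using Finset.induction_on with
  | empty => simp [IsNegLogDeriv]
  | insert a s ha ih =>
    rw [prod_insert ha, sum_insert ha]
    exact (h a (mem_insert_self a s)).mul (ih fun i hi => h i (mem_insert_of_mem hi))

theorem IsNegLogDeriv.X_pow_dvd_sub {n : ℕ} {f g L M : R⟦X⟧} (hf : IsNegLogDeriv f L)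
    (hg : IsNegLogDeriv g M) (hu : IsUnit f) (hfg : X ^ n ∣ f - g) : X ^ n ∣ L - M := by
  have key : (L - M) * f = -(X * d⁄dX R (f - g)) - M * (f - g) := by
    unfold IsNegLogDeriv at hf hg
    rw [map_sub]
    linear_combination hf - hg
  rw [← hu.dvd_mul_right, key]
  exact dvd_sub (X_pow_dvd_X_mul_derivative hfg).neg_right (hfg.mul_left M)

def negLogDerivOneSub (k : ℕ) (s : R) : R⟦X⟧ :=
  mk fun m => if m ≠ 0 ∧ k ∣ m then k * s ^ (m / k) else 0

theorem negLogDerivOneSub_mul (k : ℕ) (s : R) :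
    negLogDerivOneSub k s * (1 - C s * X ^ k) = C (k * s) * X ^ k := by
  ext m
  rw [mul_sub, mul_one, ← mul_assoc, map_sub, coeff_mul_X_pow', coeff_mul_C, coeff_C_mul_X_pow]
  simp only [negLogDerivOneSub, coeff_mk]
  rcases Nat.eq_zero_or_pos k with rfl | hk
  · simp
  rcases lt_or_ge m k with hmk | hkm
  · have hndvd : ¬(m ≠ 0 ∧ k ∣ m) := fun h => h.1 (Nat.eq_zero_of_dvd_of_lt h.2 hmk)
    simp [hndvd, hmk.not_ge, hmk.ne]
  obtain ⟨j, rfl⟩ := Nat.exists_eq_add_of_le hkm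
  rw [if_pos hkm, Nat.add_sub_cancel_left, add_comm k j, Nat.add_div_right j hk, pow_succ]
  simp only [Nat.dvd_add_self_right]
  rcases eq_or_ne j 0 with rfl | hj
  · simp [hk.ne']
  · by_cases hd : k ∣ j
    · rw [if_pos ⟨by omega, hd⟩, if_pos ⟨hj, hd⟩, if_neg (by omega)]
      ring
    · simp [hd, hj]

theorem isNegLogDeriv_one_sub (k : ℕ) (s : R) :
    IsNegLogDeriv (1 - C s * X ^ k) (negLogDerivOneSub k s) := by
  rw [IsNegLogDeriv, negLogDerivOneSub_mul]
  ext m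
  rw [map_neg, coeff_X_mul_derivative]
  simp only [map_sub, coeff_one, coeff_C_mul_X_pow]
  split_ifs <;> subst_vars <;> simp

theorem coeff_negLogDerivOneSub {m : ℕ} (hm : m ≠ 0) (k : ℕ) (s : R) :
    coeff m (negLogDerivOneSub k s) = if k ∣ m then k * s ^ (m / k) else 0 := by
  simp [negLogDerivOneSub, hm]

theorem X_pow_succ_dvd_prod_Icc_sub (S : ℕ → R) {m n : ℕ} (hmn : m ≤ n) :
    X ^ (m + 1) ∣ ∏ k ∈ Icc 1 n, (1 - C (S k) * X ^ k) - ∏ k ∈ Icc 1 m, (1 - C (S k) * X ^ k) := by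
  have htail : X ^ (m + 1) ∣ ∏ k ∈ Ioc m n, (1 - C (S k) * X ^ k) - 1 := by
    refine prod_induction _ (fun g => X ^ (m + 1) ∣ g - 1) (fun a b ha hb => ?_) (by simp)
      fun k hk => ?_
    · rw [show a * b - 1 = a * (b - 1) + (a - 1) by ring]
      exact dvd_add (hb.mul_left a) ha
    · rw [sub_sub_cancel_left, dvd_neg]
      exact (pow_dvd_pow X (mem_Ioc.mp hk).1).mul_left _
  have hsplit : ∏ k ∈ Icc 1 n, (1 - C (S k) * X ^ k) =
      (∏ k ∈ Icc 1 m, (1 - C (S k) * X ^ k)) * ∏ k ∈ Ioc m n, (1 - C (S k) * X ^ k) :=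
    (prod_Ioc_consecutive _ m.zero_le hmn).symm
  rw [hsplit, ← mul_sub_one]
  exact htail.mul_left _

end PowerSeries

open PowerSeries in
/-- If the family `S n` of elements of a commutative ring satisfies the
defining identity `(1-tx)(1-ty) = ∏_{n≥1} (1 - S_n t^n)` (expressed
coefficientwise, using that only factors with `n ≤ N` contribute to the
coefficient of `t^N`), then `x^n + y^n = ∑_{d ∣ n} d • S_d^{n/d}`. -/
theorem sum_divisors_S {R : Type*} [CommRing R] (x y : R) (S : ℕ → R)
    (hS : ∀ N : ℕ,
      coeff (R := R) N ((1 - C (R := R) x * X) * (1 - C (R := R) y * X)) =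
      coeff (R := R) N (∏ n ∈ Finset.Icc 1 N, (1 - C (R := R) (S n) * X ^ n))) :
    ∀ n : ℕ, 1 ≤ n →
      x ^ n + y ^ n = ∑ d ∈ n.divisors, (d : R) * S d ^ (n / d) := by
  intro n hn
  have hF := (isNegLogDeriv_one_sub 1 x).mul (isNegLogDeriv_one_sub 1 y)
  have hG := IsNegLogDeriv.prod (Icc 1 n) fun k _ => isNegLogDeriv_one_sub k (S k)
  simp only [pow_one] at hF
  have hFG : X ^ (n + 1) ∣ (1 - C x * X) * (1 - C y * X) - ∏ k ∈ Icc 1 n, (1 - C (S k) * X ^ k) := by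
    refine X_pow_dvd_iff.mpr fun m hm => ?_
    rw [map_sub, hS m, ← map_sub, ← neg_sub, map_neg, neg_eq_zero]
    exact X_pow_dvd_iff.mp (X_pow_succ_dvd_prod_Icc_sub S (Nat.lt_succ_iff.mp hm)) m m.lt_succ_self
  have hunit : IsUnit ((1 - C x * X) * (1 - C y * X)) :=
    isUnit_iff_constantCoeff.mpr (by simp)
  have hcoeff := X_pow_dvd_iff.mp (hF.X_pow_dvd_sub hG hunit hFG) n n.lt_succ_self
  rw [map_sub, sub_eq_zero, map_add, map_sum] at hcoeff
  simp only [coeff_negLogDerivOneSub (Nat.one_le_iff_ne_zero.mp hn), one_dvd, if_true,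
    Nat.cast_one, one_mul, Nat.div_one] at hcoeff
  rw [hcoeff, ← sum_filter]
  -- `n.divisors` is `{d ∈ Ico 1 (n + 1) | d ∣ n}`, and `Ico 1 (n + 1)` unfolds to `Icc 1 n`
  rfl
end

section
/- Let R be a multiplicatively cancellative commutative semiring of characteristic one (i.e. x ≠ 0 and xy = xz imply y = z). Then for all x, y ∈ R and n ∈ ℕ, (x + y)^n = x^n + y^n. -/
/-!
Write `a ≤ b` for `a + b = b`; since `1 + 1 = 1` addition is idempotent and this is an order
compatible with sums, products and powers. The square case follows by cancelling `x + y` from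
`(x + y) ^ 3 = (x + y) * (x ^ 2 + y ^ 2)`, where `3 = 1` collapses the binomial coefficients;
iterating gives the exponents `2 ^ k`. For general `n`, pad up to `N = m + n = 2 ^ n`: the element
`t = (x + y) ^ m * (x ^ n + y ^ n)` lies below `(x + y) ^ N` and above `x ^ N + y ^ N`, which are
equal, so `t = (x + y) ^ m * (x + y) ^ n` and `(x + y) ^ m` cancels.
-/

section OneAddOneEqOne

variable {R : Type*}

theorem add_self_of_one_add_one [Semiring R] (h1 : (1 : R) + 1 = 1) (a : R) : a + a = a := by
  calc a + a = a * (1 + 1) := by rw [mul_add, mul_one]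
    _ = a := by rw [h1, mul_one]

theorem add_eq_zero_iff_of_one_add_one [Semiring R] (h1 : (1 : R) + 1 = 1) {a b : R} :
    a + b = 0 ↔ a = 0 ∧ b = 0 := by
  refine ⟨fun hab => ⟨?_, ?_⟩, fun ⟨ha, hb⟩ => by rw [ha, hb, add_zero]⟩
  · calc a = a + (a + b) := by rw [hab, add_zero]
      _ = a + b := by rw [← add_assoc, add_self_of_one_add_one h1]
      _ = 0 := hab
  · calc b = a + b + b := by rw [hab, zero_add]
      _ = a + b := by rw [add_assoc, add_self_of_one_add_one h1]
      _ = 0 := hab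

theorem pow_add_pow_of_add_eq_right [Semiring R] (h1 : (1 : R) + 1 = 1) {a b : R}
    (hab : a + b = b) (n : ℕ) : a ^ n + b ^ n = b ^ n := by
  induction n with
  | zero => simpa using h1
  | succ k ih =>
    have hakb : a ^ k * b = a ^ (k + 1) + a ^ k * b := by
      rw [pow_succ, ← mul_add, hab]
    have hb : b ^ (k + 1) = a ^ k * b + b ^ (k + 1) := by rw [pow_succ, ← add_mul, ih]
    calc a ^ (k + 1) + b ^ (k + 1) = a ^ (k + 1) + a ^ k * b + b ^ (k + 1) := by
          rw [add_assoc, ← hb]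
      _ = a ^ k * b + b ^ (k + 1) := by rw [← hakb]
      _ = b ^ (k + 1) := hb.symm

variable [CommSemiring R] [IsLeftCancelMulZero R]

theorem add_sq_of_one_add_one (h1 : (1 : R) + 1 = 1) (x y : R) :
    (x + y) ^ 2 = x ^ 2 + y ^ 2 := by
  by_cases hs : x + y = 0
  · obtain ⟨rfl, rfl⟩ := (add_eq_zero_iff_of_one_add_one h1).mp hs
    simp
  · have h3 : (3 : R) = 1 := by
      rw [show (3 : R) = 1 + 1 + 1 by norm_num, h1, h1]
    apply mul_left_cancel₀ hs
    calc (x + y) * (x + y) ^ 2 = x ^ 3 + 3 * (x ^ 2 * y) + 3 * (x * y ^ 2) + y ^ 3 := by ring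
      _ = (x + y) * (x ^ 2 + y ^ 2) := by rw [h3]; ring

theorem add_pow_two_pow_of_one_add_one (h1 : (1 : R) + 1 = 1) (x y : R) (k : ℕ) :
    (x + y) ^ 2 ^ k = x ^ 2 ^ k + y ^ 2 ^ k := by
  induction k with
  | zero => simp
  | succ k ih => rw [pow_succ, pow_mul, pow_mul, pow_mul, ih, add_sq_of_one_add_one h1]

theorem add_pow_of_add_pow_of_le (h1 : (1 : R) + 1 = 1) {x y : R} (hs : x + y ≠ 0) {n N : ℕ}
    (hnN : n ≤ N) (hN : (x + y) ^ N = x ^ N + y ^ N) : (x + y) ^ n = x ^ n + y ^ n := by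
  set s := x + y
  obtain ⟨m, rfl⟩ : ∃ m, N = m + n := ⟨N - n, (Nat.sub_add_cancel hnN).symm⟩
  have hxs : x + s = s := by rw [← add_assoc, add_self_of_one_add_one h1]
  have hys : y + s = s := by rw [add_left_comm, add_self_of_one_add_one h1]
  have ht_le : s ^ m * (x ^ n + y ^ n) + s ^ (m + n) = s ^ (m + n) := by
    rw [pow_add, ← mul_add, add_assoc, pow_add_pow_of_add_eq_right h1 hys,
      pow_add_pow_of_add_eq_right h1 hxs]
  have hx_le : x ^ (m + n) + s ^ m * (x ^ n + y ^ n) = s ^ m * (x ^ n + y ^ n) := by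
    rw [pow_add, mul_add, ← add_assoc, ← add_mul, pow_add_pow_of_add_eq_right h1 hxs]
  have hy_le : y ^ (m + n) + s ^ m * (x ^ n + y ^ n) = s ^ m * (x ^ n + y ^ n) := by
    rw [pow_add, mul_add, add_left_comm, ← add_mul, pow_add_pow_of_add_eq_right h1 hys]
  refine (mul_left_cancel₀ (pow_ne_zero m hs) ?_).symm
  calc s ^ m * (x ^ n + y ^ n)
        = x ^ (m + n) + (y ^ (m + n) + s ^ m * (x ^ n + y ^ n)) := by rw [hy_le, hx_le]
    _ = s ^ m * (x ^ n + y ^ n) + s ^ (m + n) := by rw [← add_assoc, ← hN, add_comm]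
    _ = s ^ m * s ^ n := by rw [ht_le, pow_add]

end OneAddOneEqOne

theorem char_one_frobenius_additive {R : Type*} [CommSemiring R]
    (h1 : (1 : R) + 1 = 1)
    (hcanc : ∀ x y z : R, x ≠ 0 → x * y = x * z → y = z)
    (x y : R) (n : ℕ) : (x + y) ^ n = x ^ n + y ^ n := by
  have : IsLeftCancelMulZero R := ⟨fun ha _ _ h => hcanc _ _ _ ha h⟩
  by_cases hs : x + y = 0
  · obtain ⟨rfl, rfl⟩ := (add_eq_zero_iff_of_one_add_one h1).mp hs
    rw [add_self_of_one_add_one h1, add_self_of_one_add_one h1]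
  · exact add_pow_of_add_pow_of_le h1 hs Nat.lt_two_pow_self.le
      (add_pow_two_pow_of_one_add_one h1 x y n)
end

section
/- Let R be a multiplicatively cancellative commutative semiring of characteristic one. Then the map x ↦ x^n is injective for every n ≥ 1: x^n = y^n implies x = y. -/
section Aux

variable {R : Type*} [CommSemiring R]

private lemma myAddIdem (h1 : (1 : R) + 1 = 1) (a : R) : a + a = a := by
  have : a * (1 + 1) = a * 1 := by rw [h1]
  calc a + a = a * (1 + 1) := by ring
    _ = a * 1 := this
    _ = a := mul_one a

private lemma absorb (h1 : (1 : R) + 1 = 1) : ∀ (n : ℕ) (a b : R), (a + b) ^ n + b ^ n = (a + b) ^ n := by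
  intro n
  induction n with
  | zero => intro a b; simpa using h1
  | succ n ih =>
    intro a b
    have h2 : (a + b) ^ (n + 1) = (a + b) ^ (n + 1) + a * b ^ n + b ^ (n + 1) := by
      calc (a + b) ^ (n + 1) = (a + b) * ((a + b) ^ n + b ^ n) := by rw [ih]; ring
        _ = (a + b) ^ (n + 1) + a * b ^ n + b ^ (n + 1) := by ring
    calc (a + b) ^ (n + 1) + b ^ (n + 1)
        = ((a + b) ^ (n + 1) + a * b ^ n + b ^ (n + 1)) + b ^ (n + 1) := by rw [← h2]
      _ = (a + b) ^ (n + 1) + a * b ^ n + (b ^ (n + 1) + b ^ (n + 1)) := by ring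
      _ = (a + b) ^ (n + 1) + a * b ^ n + b ^ (n + 1) := by rw [myAddIdem h1]
      _ = (a + b) ^ (n + 1) := h2.symm

private lemma expand (h1 : (1 : R) + 1 = 1) : ∀ (n : ℕ) (a b : R),
    (a + b) ^ (n + 1) = a * (a + b) ^ n + b ^ (n + 1) := by
  intro n
  induction n with
  | zero => intro a b; ring
  | succ n ih =>
    intro a b
    calc (a + b) ^ (n + 2) = (a + b) * ((a + b) ^ (n + 1)) := by ring
      _ = (a + b) * (a * (a + b) ^ n + b ^ (n + 1)) := by rw [ih]
      _ = a ^ 2 * (a + b) ^ n + (a * b * ((a + b) ^ n + b ^ n) + b ^ (n + 2)) := by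
          ring
      _ = a ^ 2 * (a + b) ^ n + (a * b * (a + b) ^ n + b ^ (n + 2)) := by
          rw [absorb h1]
      _ = a * (a + b) ^ (n + 1) + b ^ (n + 2) := by ring

end Aux

theorem char_one_pow_injective {R : Type*} [CommSemiring R]
    (h1 : (1 : R) + 1 = 1)
    (hcanc : ∀ x y z : R, x ≠ 0 → x * y = x * z → y = z)
    (n : ℕ) (hn : 1 ≤ n) (x y : R) (h : x ^ n = y ^ n) : x = y := by
  obtain ⟨m, rfl⟩ : ∃ m, n = m + 1 := ⟨n - 1, (Nat.succ_pred_eq_of_pos hn).symm⟩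
  -- key: x * (x+y)^m = (x+y)^(m+1) = y * (x+y)^m
  have key1 : (x + y) ^ (m + 1) = x * (x + y) ^ m := by
    calc (x + y) ^ (m + 1) = x * (x + y) ^ m + y ^ (m + 1) := expand h1 m x y
      _ = x * (x + y) ^ m + x * x ^ m := by rw [← h]; ring_nf
      _ = x * ((x + y) ^ m + x ^ m) := by ring
      _ = x * ((y + x) ^ m + x ^ m) := by rw [add_comm x y]
      _ = x * (y + x) ^ m := by rw [absorb h1]
      _ = x * (x + y) ^ m := by rw [add_comm x y]
  have key2 : (x + y) ^ (m + 1) = y * (x + y) ^ m := by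
    calc (x + y) ^ (m + 1) = (y + x) ^ (m + 1) := by rw [add_comm]
      _ = y * (y + x) ^ m + x ^ (m + 1) := expand h1 m y x
      _ = y * (y + x) ^ m + y * y ^ m := by rw [h]; ring_nf
      _ = y * ((y + x) ^ m + y ^ m) := by ring
      _ = y * ((x + y) ^ m + y ^ m) := by rw [add_comm y x]
      _ = y * (x + y) ^ m := by rw [absorb h1]
  -- now either (x+y)^m ≠ 0 and we cancel, or we descend to the trivial ring
  have descend : ∀ (k : ℕ), (x + y) ^ k = 0 → x = y := by
    intro k
    induction k with
    | zero =>
      intro h0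
      simp only [pow_zero] at h0
      have : Subsingleton R := subsingleton_of_zero_eq_one h0.symm
      exact Subsingleton.elim x y
    | succ k ih =>
      intro h0
      by_cases hs : (x + y) = 0
      · have hx : x = 0 := by
          calc x = x + 0 := (add_zero x).symm
            _ = x + (x + y) := by rw [hs]
            _ = (x + x) + y := by ring
            _ = x + y := by rw [myAddIdem h1]
            _ = 0 := hs
        have hy : y = 0 := by
          calc y = 0 + y := (zero_add y).symm
            _ = (x + y) + y := by rw [hs]
            _ = x + (y + y) := by ring
            _ = x + y := by rw [myAddIdem h1]
            _ = 0 := hs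
        rw [hx, hy]
      · apply ih
        apply hcanc (x + y) _ _ hs
        rw [mul_zero, ← pow_succ']
        exact h0
  by_cases hz : (x + y) ^ m = 0
  · exact descend m hz
  · exact hcanc ((x + y) ^ m) x y hz (by rw [mul_comm, ← key1, mul_comm, ← key2])
end

section
/- Let R be a multiplicatively cancellative commutative semiring of characteristic one. Then for every n ≥ 1, x ↦ x^n is a semiring endomorphism of R: it is additive, multiplicative, sends 0 to 0 and 1 to 1, and is injective. -/
/-!
With `1 + 1 = 1` addition is idempotent, so `R` is an idempotent semiring, ordered by
`a ≤ b ↔ a + b = b`. Every monomial `x ^ a * y ^ b` with `a + b = i + j` has `i ≤ a` or `j ≤ b`,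
whence `(x + y) ^ (i + j) = x ^ i * (x + y) ^ j + y ^ j * (x + y) ^ i`. For `i = j = n` this reads
`(x + y) ^ n * (x + y) ^ n = (x + y) ^ n * (x ^ n + y ^ n)`, and cancelling `(x + y) ^ n` gives
additivity of `x ↦ x ^ n`. For injectivity, `x ^ n = y ^ n` gives `x ^ n = (x + y) ^ n` with
`x ≤ x + y`; and `a ≤ b`, `a ^ n = b ^ n` force `a ^ (n - 1) * a = a ^ (n - 1) * b`, so `a = b` by
cancellation.
-/

namespace IdemCommSemiring

variable {R : Type*} [IdemCommSemiring R]

theorem add_pow_add_eq (x y : R) (i j : ℕ) :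
    (x + y) ^ (i + j) = x ^ i * (x + y) ^ j + y ^ j * (x + y) ^ i := by
  refine le_antisymm ?_ (add_le ?_ ?_)
  · induction i generalizing j with
    | zero => simp
    | succ i ihi =>
      induction j with
      | zero => simp
      | succ j ihj =>
        calc (x + y) ^ (i + 1 + (j + 1))
            = x * (x + y) ^ (i + (j + 1)) + y * (x + y) ^ (i + 1 + j) := by ring
          _ ≤ x * (x ^ i * (x + y) ^ (j + 1) + y ^ (j + 1) * (x + y) ^ i)
              + y * (x ^ (i + 1) * (x + y) ^ j + y ^ j * (x + y) ^ (i + 1)) := by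
            gcongr
            exact ihi (j + 1)
          _ = x ^ (i + 1) * (x + y) ^ (j + 1) + y ^ (j + 1) * ((x + y) ^ i * x)
              + (x ^ (i + 1) * ((x + y) ^ j * y) + y ^ (j + 1) * (x + y) ^ (i + 1)) := by ring
          _ ≤ x ^ (i + 1) * (x + y) ^ (j + 1) + y ^ (j + 1) * ((x + y) ^ i * (x + y))
              + (x ^ (i + 1) * ((x + y) ^ j * (x + y)) + y ^ (j + 1) * (x + y) ^ (i + 1)) := by
            gcongr
            exacts [le_self_add, le_add_self]
          _ = x ^ (i + 1) * (x + y) ^ (j + 1) + y ^ (j + 1) * (x + y) ^ (i + 1) := by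
            rw [← pow_succ, ← pow_succ, add_idem]
  · calc x ^ i * (x + y) ^ j ≤ (x + y) ^ i * (x + y) ^ j := by gcongr; exact le_self_add
      _ = (x + y) ^ (i + j) := (pow_add _ _ _).symm
  · calc y ^ j * (x + y) ^ i ≤ (x + y) ^ j * (x + y) ^ i := by gcongr; exact le_add_self
      _ = (x + y) ^ (i + j) := by rw [mul_comm, ← pow_add]

variable [IsLeftCancelMulZero R]

theorem add_pow_eq_pow_add_pow (x y : R) (n : ℕ) : (x + y) ^ n = x ^ n + y ^ n := by
  rcases eq_or_ne (x + y) 0 with hxy | hxy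
  · obtain ⟨rfl, rfl⟩ := add_eq_zero.1 hxy
    rw [add_zero, add_idem]
  · refine mul_left_cancel₀ (pow_ne_zero n hxy) ?_
    rw [← pow_add, add_pow_add_eq, mul_add, mul_comm (x ^ n), mul_comm (y ^ n)]

theorem eq_of_le_of_pow_eq {a b : R} {n : ℕ} (hn : n ≠ 0) (hab : a ≤ b) (h : a ^ n = b ^ n) :
    a = b := by
  obtain ⟨m, rfl⟩ := Nat.exists_eq_succ_of_ne_zero hn
  rcases eq_or_ne a 0 with rfl | ha
  · exact ((pow_eq_zero_iff hn).1 (h.symm.trans (zero_pow hn))).symm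
  · refine mul_left_cancel₀ (pow_ne_zero m ha) (le_antisymm (by gcongr) ?_)
    calc a ^ m * b ≤ b ^ m * b := by gcongr
      _ = a ^ m * a := by rw [← pow_succ, ← h, pow_succ]

theorem pow_left_injective {n : ℕ} (hn : n ≠ 0) : Function.Injective fun x : R ↦ x ^ n := by
  intro x y (h : x ^ n = y ^ n)
  have hx : x ^ n = (x + y) ^ n := by rw [add_pow_eq_pow_add_pow, ← h, add_idem]
  have hy : y ^ n = (x + y) ^ n := by rw [add_pow_eq_pow_add_pow, h, add_idem]
  exact (eq_of_le_of_pow_eq hn le_self_add hx).trans (eq_of_le_of_pow_eq hn le_add_self hy).symm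

end IdemCommSemiring

theorem char_one_frobenius_endomorphism {R : Type*} [CommSemiring R]
    (h1 : (1 : R) + 1 = 1)
    (hcanc : ∀ x y z : R, x ≠ 0 → x * y = x * z → y = z)
    (n : ℕ) (hn : 1 ≤ n) :
    (∀ x y : R, (x + y) ^ n = x ^ n + y ^ n) ∧
    (∀ x y : R, (x * y) ^ n = x ^ n * y ^ n) ∧
    ((0 : R) ^ n = 0) ∧ ((1 : R) ^ n = 1) ∧
    Function.Injective (fun x : R => x ^ n) := by
  let : IdemCommSemiring R :=
    { ‹CommSemiring R›, IdemSemiring.ofSemiring fun a ↦ by rw [← one_mul a, ← add_mul, h1] with }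
  have : IsLeftCancelMulZero R := ⟨fun ha _ _ ↦ hcanc _ _ _ ha⟩
  have hn : n ≠ 0 := Nat.one_le_iff_ne_zero.1 hn
  exact ⟨IdemCommSemiring.add_pow_eq_pow_add_pow (n := n), (mul_pow · · n), zero_pow hn,
    one_pow n, IdemCommSemiring.pow_left_injective hn⟩
end

section
/- Let R be a multiplicatively cancellative commutative semiring of characteristic one, with canonical order x ≤ y iff x + y = y. For n ≥ 1, x ≤ y if and only if x^n ≤ y^n. -/
section CharOneAux
variable {R : Type*} [CommSemiring R]

private lemma co_idem (h1 : (1:R)+1 = 1) (a : R) : a + a = a := by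
  have h : (1+1)*a = 1*a := by rw [h1]
  simpa [add_mul] using h

/-- if b = a + c then a ≤ b -/
private lemma co_absorb (h1 : (1:R)+1 = 1) {a b c : R} (hab : b = a + c) : a + b = b := by
  rw [hab, ← add_assoc, co_idem h1]

private lemma co_pow_le (h1 : (1:R)+1 = 1) {x y : R} (h : x + y = y) :
    ∀ m : ℕ, x ^ m + y ^ m = y ^ m := by
  intro m
  induction m with
  | zero => simpa using h1
  | succ m ih =>
    have e : y^(m+1) = x^(m+1) + (x*y^m + y*x^m + y^(m+1)) := by
      calc y^(m+1) = (x+y)*(x^m+y^m) := by rw [h, ih]; ring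
      _ = _ := by ring
    exact co_absorb h1 e

/-- x + y ≤ y when x ≤ y -/
private lemma co_mul_le (h1 : (1:R)+1 = 1) {a b : R} (h : a + b = b) (c : R) :
    c * a + c * b = c * b := by rw [← mul_add, h]

/-- key: (x+y)^(m+1) = x^(m+1) + y*(x+y)^m -/
private lemma co_key (h1 : (1:R)+1 = 1) (x y : R) :
    ∀ m : ℕ, (x + y) ^ (m+1) = x ^ (m+1) + y * (x + y) ^ m := by
  intro m
  induction m with
  | zero => simp
  | succ m ih =>
    have hxs : x * (x+y)^m + (x+y)^(m+1) = (x+y)^(m+1) := by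
      have : (x+y)^(m+1) = x*(x+y)^m + y*(x+y)^m := by ring
      exact co_absorb h1 this
    -- x*y*(x+y)^m ≤ y*(x+y)^(m+1)
    have habs : x*y*(x+y)^m + y*(x+y)^(m+1) = y*(x+y)^(m+1) := by
      have := co_mul_le h1 hxs y
      calc x*y*(x+y)^m + y*(x+y)^(m+1) = y*(x*(x+y)^m) + y*((x+y)^(m+1)) := by ring
        _ = y*((x+y)^(m+1)) := this
        _ = y*(x+y)^(m+1) := rfl
    calc (x+y)^(m+2) = (x+y) * (x+y)^(m+1) := by ring
      _ = (x+y) * (x^(m+1) + y*(x+y)^m) := by rw [← ih]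
      _ = x^(m+2) + (x*y*(x+y)^m + (y*x^(m+1) + y*y*(x+y)^m)) := by ring
      _ = x^(m+2) + (x*y*(x+y)^m + y*(x+y)^(m+1)) := by rw [ih]; ring_nf
      _ = x^(m+2) + y*(x+y)^(m+1) := by rw [habs]

private lemma co_pow_eq_zero (hcanc : ∀ x y z : R, x ≠ 0 → x * y = x * z → y = z)
    {a : R} : ∀ m : ℕ, a ^ (m+1) = 0 → a = 0 := by
  intro m
  induction m with
  | zero => simpa using id
  | succ m ih =>
    intro h
    by_cases ha : a = 0
    · exact ha
    · have : a * a^(m+1) = a * 0 := by rw [mul_zero]; rw [← h]; ring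
      exact ih (hcanc _ _ _ ha this)

private lemma co_aux (h1 : (1:R)+1 = 1)
    (hcanc : ∀ x y z : R, x ≠ 0 → x * y = x * z → y = z) :
    ∀ n : ℕ, ∀ x y : R, x ^ (n+1) + y ^ (n+1) = y ^ (n+1) → x + y = y := by
  intro n
  induction n using Nat.strong_induction_on with
  | _ n IH =>
    intro x y h
    match n with
    | 0 => simpa using h
    | Nat.succ m =>
      set s := x + y with hs
      have hxs : x + s = s := co_absorb h1 (by rw [hs])
      have hys : y + s = s := co_absorb h1 (by rw [hs]; ring)
      by_cases hs0 : s = 0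
      · have hx0 : x = 0 := by have := hxs; rw [hs0, add_zero] at this; exact this
        have hy0 : y = 0 := by have := hys; rw [hs0, add_zero] at this; exact this
        show x + y = y
        rw [hx0, hy0, add_zero]
      · -- s^(m+2) = y * s^(m+1)
        have hkey : s^(m+2) = x^(m+2) + y * s^(m+1) := co_key h1 x y (m+1)
        have hy_pow : y^(m+1) + s^(m+1) = s^(m+1) := co_pow_le h1 hys (m+1)
        -- x^(m+2) ≤ y^(m+2) ≤ y*s^(m+1)
        have h2 : y^(m+2) + y*s^(m+1) = y*s^(m+1) := by
          have := co_mul_le h1 hy_pow y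
          calc y^(m+2) + y*s^(m+1) = y*y^(m+1) + y*s^(m+1) := by ring
            _ = y*s^(m+1) := this
        have h3 : x^(m+2) + y*s^(m+1) = y*s^(m+1) := by
          calc x^(m+2) + y*s^(m+1) = x^(m+2) + (y^(m+2) + y*s^(m+1)) := by rw [h2]
            _ = (x^(m+2) + y^(m+2)) + y*s^(m+1) := by ring
            _ = y^(m+2) + y*s^(m+1) := by rw [h]
            _ = y*s^(m+1) := h2
        have hsn : s^(m+2) = y * s^(m+1) := by rw [hkey, h3]
        -- iterate: s^(m+1) * y^k = s^(m+1+k)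
        have hiter : ∀ k : ℕ, s^(m+1) * y^k = s^(m+1+k) := by
          intro k
          induction k with
          | zero => simp
          | succ k ihk =>
            calc s^(m+1) * y^(k+1) = y * (s^(m+1) * y^k) := by ring
              _ = y * s^(m+1+k) := by rw [ihk]
              _ = (y * s^(m+1)) * s^k := by ring
              _ = s^(m+2) * s^k := by rw [hsn]
              _ = s^(m+1+(k+1)) := by ring
        have hcan : s^(m+1) * y^(m+1) = s^(m+1) * s^(m+1) := by
          rw [hiter (m+1)]; ring
        have hsne : s^(m+1) ≠ 0 := fun hh => hs0 (co_pow_eq_zero hcanc m hh)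
        have hys_eq : y^(m+1) = s^(m+1) := hcanc _ _ _ hsne hcan
        have hx_pow : x^(m+1) + s^(m+1) = s^(m+1) := co_pow_le h1 hxs (m+1)
        rw [← hys_eq] at hx_pow
        show x + y = y
        exact IH m (Nat.lt_succ_self m) x y hx_pow

end CharOneAux

theorem char_one_pow_le_iff {R : Type*} [CommSemiring R]
    (h1 : (1 : R) + 1 = 1)
    (hcanc : ∀ x y z : R, x ≠ 0 → x * y = x * z → y = z)
    (n : ℕ) (hn : 1 ≤ n) (x y : R) :
    x + y = y ↔ x ^ n + y ^ n = y ^ n := by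
  constructor
  · intro h; exact co_pow_le h1 h n
  · intro h
    obtain ⟨m, rfl⟩ := Nat.exists_eq_add_of_le hn
    exact co_aux h1 hcanc m x y (by simpa [add_comm 1 m] using h)
end

section
/- Let R be a multiplicatively cancellative commutative semiring of characteristic one in which every Frobenius map x ↦ x^n (n ≥ 1) is surjective (R is perfect). For a, b ∈ ℕ with a + b = n ≥ 1 and any x, y ∈ R, one has x^a y^b ≤ (x+y)^n in the canonical order. Consequently, for α = a/n ∈ ℚ ∩ (0,1), the α-th power x^α (the unique z with z^n = x^a) satisfies x^α y^{1-α} ≤ x + y. -/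
section Aux
variable {R : Type*} [CommSemiring R]

lemma myIdem (h1 : (1 : R) + 1 = 1) (r : R) : r + r = r := by
  have : r * (1 + 1) = r * 1 := by rw [h1]
  simpa [mul_add] using this

lemma myMulMono (h1 : (1 : R) + 1 = 1) {p P q Q : R} (hp : p + P = P) (hq : q + Q = Q) :
    p * q + P * Q = P * Q := by
  calc p * q + P * Q = p * q + (p + P) * (q + Q) := by rw [hp, hq]
    _ = (p * q + p * q) + (p * Q + (P * q + P * Q)) := by ring
    _ = p * q + (p * Q + (P * q + P * Q)) := by rw [myIdem h1]
    _ = (p + P) * (q + Q) := by ring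
    _ = P * Q := by rw [hp, hq]

lemma myPowMono (h1 : (1 : R) + 1 = 1) {p q : R} (hpq : p + q = q) (k : ℕ) :
    p ^ k + q ^ k = q ^ k := by
  induction k with
  | zero => simpa using h1
  | succ k ih => rw [pow_succ, pow_succ]; exact myMulMono h1 ih hpq

lemma myTrans {p q r : R} (h1 : p + q = q) (h2 : q + r = r) : p + r = r := by
  calc p + r = p + (q + r) := by rw [h2]
    _ = (p + q) + r := by rw [add_assoc]
    _ = q + r := by rw [h1]
    _ = r := h2

lemma myRoot (h1 : (1 : R) + 1 = 1)
    (hcanc : ∀ x y z : R, x ≠ 0 → x * y = x * z → y = z)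
    {n : ℕ} (hn : 1 ≤ n) {A B : R} (h : A ^ n + B ^ n = B ^ n) :
    A + B = B := by
  by_cases h10 : (1 : R) = 0
  · have hz : ∀ r : R, r = 0 := fun r => by
      calc r = r * 1 := (mul_one r).symm
        _ = r * 0 := by rw [h10]
        _ = 0 := mul_zero r
    rw [hz (A + B), hz B]
  by_cases hC : A + B = 0
  · have hB : B + (A + B) = A + B := by
      calc B + (A + B) = A + (B + B) := by ring
        _ = A + B := by rw [myIdem h1]
    rw [hC, add_zero] at hB
    have hA : A = 0 := by rw [hB, add_zero] at hC; exact hC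
    rw [hA, hB, add_zero]
  obtain ⟨m, rfl⟩ : ∃ m, n = m + 1 := ⟨n - 1, (Nat.succ_pred_eq_of_pos hn).symm⟩
  have hCk : ∀ k, (A + B) ^ k ≠ 0 := by
    intro k
    induction k with
    | zero => simpa using h10
    | succ k ih =>
      intro hk
      apply ih
      apply hcanc (A + B) _ _ hC
      rw [mul_zero]
      calc (A + B) * (A + B) ^ k = (A + B) ^ (k + 1) := by rw [pow_succ, mul_comm]
        _ = 0 := hk
  have hAC : A + (A + B) = A + B := by
    calc A + (A + B) = (A + A) + B := by ring
      _ = A + B := by rw [myIdem h1]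
  have hBC : B + (A + B) = A + B := by
    calc B + (A + B) = A + (B + B) := by ring
      _ = A + B := by rw [myIdem h1]
  have U : ∀ j i, i + j = m + 1 → 1 ≤ i →
      A ^ i * (A + B) ^ j + B * (A + B) ^ m = B * (A + B) ^ m := by
    intro j
    induction j with
    | zero =>
      intro i hij _
      have hi : i = m + 1 := by omega
      subst hi
      have h2 : B ^ (m + 1) + B * (A + B) ^ m = B * (A + B) ^ m := by
        rw [pow_succ']
        exact myMulMono h1 (myIdem h1 B) (myPowMono h1 hBC m)
      have h3 := myTrans h h2
      simpa using h3
    | succ j ih =>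
      intro i hij hi
      have hterm1 : A ^ (i + 1) * (A + B) ^ j + B * (A + B) ^ m = B * (A + B) ^ m :=
        ih (i + 1) (by omega) (by omega)
      have hterm2 : B * (A ^ i * (A + B) ^ j) + B * (A + B) ^ m = B * (A + B) ^ m := by
        apply myMulMono h1 (myIdem h1 B)
        have h4 : A ^ i * (A + B) ^ j + (A + B) ^ i * (A + B) ^ j
            = (A + B) ^ i * (A + B) ^ j :=
          myMulMono h1 (myPowMono h1 hAC i) (myIdem h1 ((A + B) ^ j))
        rw [← pow_add] at h4
        have him : i + j = m := by omega
        rwa [him] at h4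
      have expand : A ^ i * (A + B) ^ (j + 1)
          = A ^ (i + 1) * (A + B) ^ j + B * (A ^ i * (A + B) ^ j) := by
        rw [pow_succ, pow_succ]; ring
      rw [expand, add_assoc]
      calc A ^ (i + 1) * (A + B) ^ j + (B * (A ^ i * (A + B) ^ j) + B * (A + B) ^ m)
          = A ^ (i + 1) * (A + B) ^ j + B * (A + B) ^ m := by rw [hterm2]
        _ = B * (A + B) ^ m := hterm1
  have hfin : A * (A + B) ^ m + B * (A + B) ^ m = B * (A + B) ^ m := by
    have := U m 1 (by omega) le_rfl
    simpa using this
  have hkey : (A + B) ^ m * (A + B) = (A + B) ^ m * B := by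
    calc (A + B) ^ m * (A + B) = A * (A + B) ^ m + B * (A + B) ^ m := by ring
      _ = B * (A + B) ^ m := hfin
      _ = (A + B) ^ m * B := by ring
  exact hcanc _ _ _ (hCk m) hkey

end Aux

theorem char_one_fractional_power_le {R : Type*} [CommSemiring R]
    (h1 : (1 : R) + 1 = 1)
    (hcanc : ∀ x y z : R, x ≠ 0 → x * y = x * z → y = z)
    (hperf : ∀ n : ℕ, 1 ≤ n → Function.Surjective (fun x : R => x ^ n))
    (a b n : ℕ) (hab : a + b = n) (hn : 1 ≤ n) (x y : R) (z w : R)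
    (hz : z ^ n = x ^ a) (hw : w ^ n = y ^ b) :
    (x ^ a * y ^ b + (x + y) ^ n = (x + y) ^ n) ∧
    (z * w + (x + y) = x + y) := by
  have hx : x ^ a + (x + y) ^ a = (x + y) ^ a :=
    myPowMono h1 (by calc x + (x + y) = (x + x) + y := by ring
      _ = x + y := by rw [myIdem h1]) a
  have hy' : y ^ b + (x + y) ^ b = (x + y) ^ b :=
    myPowMono h1 (by calc y + (x + y) = x + (y + y) := by ring
      _ = x + y := by rw [myIdem h1]) b
  have part1 : x ^ a * y ^ b + (x + y) ^ n = (x + y) ^ n := by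
    have h5 := myMulMono h1 hx hy'
    rwa [← pow_add, hab] at h5
  refine ⟨part1, ?_⟩
  apply myRoot h1 hcanc hn
  rw [mul_pow, hz, hw]
  exact part1
end

section
/- Let G be a multiplicative abelian group which is uniquely divisible (so g^α makes sense for g ∈ G, α ∈ ℚ), and let χ : ℚ₊* → G be a group homomorphism. Then w : ℚ ∩ (0,1) → G defined by w(α) = χ(α)^α · χ(1-α)^{1-α} satisfies the symmetry w(1-α) = w(α) and the associativity functional equation w(α)·w(β)^α = w(αβ)·w(α(1-β)/(1-αβ))^{1-αβ} for all α, β ∈ ℚ ∩ (0,1). -/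
/-- Writing the uniquely divisible abelian group `G` additively (so that it is
a `ℚ`-vector space, with `g^α` written `α • g`), if `χ` is a homomorphism from
the multiplicative group of positive rationals to `G`, then
`w(α) = α • χ(α) + (1-α) • χ(1-α)` satisfies the symmetry `w(1-α) = w(α)` and
the associativity functional equation
`w(α) + α • w(β) = w(αβ) + (1-αβ) • w(α(1-β)/(1-αβ))` on `I = ℚ ∩ (0,1)`. -/
theorem entropy_form_solves_equations {G : Type*} [AddCommGroup G] [Module ℚ G]
    (χ : ℚ → G) (hχ : ∀ a b : ℚ, 0 < a → 0 < b → χ (a * b) = χ a + χ b)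
    (w : ℚ → G) (hw : ∀ α : ℚ, w α = α • χ α + (1 - α) • χ (1 - α)) :
    (∀ α : ℚ, 0 < α → α < 1 → w (1 - α) = w α) ∧
    (∀ α β : ℚ, 0 < α → α < 1 → 0 < β → β < 1 →
      w α + α • w β =
        w (α * β) + (1 - α * β) • w (α * (1 - β) / (1 - α * β))) := by
  have hdiv : ∀ a b : ℚ, 0 < a → 0 < b → χ (a / b) = χ a - χ b := by
    intro a b ha hb
    have h := hχ (a / b) b (div_pos ha hb) hb
    rw [div_mul_cancel₀ _ hb.ne'] at h
    rw [eq_sub_iff_add_eq]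
    exact h.symm
  constructor
  · intro α h0 h1
    rw [hw, hw, show (1:ℚ) - (1 - α) = α by ring]
    abel
  · intro α β hα0 hα1 hβ0 hβ1
    have h1 : (0:ℚ) < 1 - β := by linarith
    have h2 : (0:ℚ) < 1 - α * β := by nlinarith
    have h3 : (0:ℚ) < 1 - α := by linarith
    have hγ : (1:ℚ) - α * (1 - β) / (1 - α * β) = (1 - α) / (1 - α * β) := by
      field_simp
      ring
    rw [hw, hw, hw, hw, hχ α β hα0 hβ0, hγ,
      show α * (1 - β) / (1 - α * β) = (α * (1 - β)) / (1 - α * β) from rfl,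
      hdiv _ _ (by positivity) h2, hdiv _ _ h3 h2, hχ α (1 - β) hα0 h1]
    match_scalars <;> field_simp <;> ring
end

section
/- Let w : ℚ ∩ (0,1) → G satisfy w(1-α) = w(α) and w(α)w(β)^α = w(αβ) w(α(1-β)/(1-αβ))^{1-αβ} for a uniquely divisible abelian group G. Then there exists a unique homomorphism χ : ℚ₊* → G with χ(1/n) = w applied via formula (4n) to the uniform point (1/n,…,1/n), and w(β) = χ(β)^β χ(1-β)^{1-β} for all β ∈ ℚ ∩ (0,1). -/
/-!
Put `h(x, y) = (x + y) • w (x / (x + y))` (`homogenize w x y`) for positive rationals. It is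
homogeneous of degree one, and the associativity equation says exactly that `h` is a 2-cocycle:
`h(x + y, z) + h(x, y) = h(x, y + z) + h(y, z)`.
For `T(n) = n • w⁽ⁿ⁾(1/n, …, 1/n) = ∑_{j=2}^{n} j • w(1/j)` (`uniformSum w n`) the cocycle
identity gives `T(p + q) = T(p) + T(q) + h(p, q)` by induction, and homogeneity then gives
`T(mn) = m • T(n) + n • T(m)`. Hence `L(n) = T(n)/n` is completely additive and extends to a
homomorphism `χ(a/b) = L(b) - L(a)` on the positive rationals, while
`w(p/(p+r)) = h(p, r)/(p+r) = (T(p+r) - T(p) - T(r))/(p+r)` is the entropy form.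
A homomorphism on the positive rationals is determined by its values at the `1/n`.
-/

open Finset

lemma Rat.natAbs_num_div_den {q : ℚ} (hq : 0 ≤ q) : (q.num.natAbs : ℚ) / q.den = q := by
  rw [Nat.cast_natAbs, Int.cast_abs, abs_of_nonneg (by exact_mod_cast Rat.num_nonneg.mpr hq),
    Rat.num_div_den]

lemma Rat.natAbs_num_pos {q : ℚ} (hq : 0 < q) : 0 < q.num.natAbs :=
  Int.natAbs_pos.mpr (Rat.num_pos.mpr hq).ne'

lemma Rat.exists_eq_natCast_div_add {β : ℚ} (h0 : 0 < β) (h1 : β < 1) :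
    ∃ p r : ℕ, 0 < p ∧ 0 < r ∧ β = p / (p + r : ℕ) := by
  have hlt : β.num.natAbs < β.den := by
    have h := Rat.natAbs_num_div_den h0.le ▸ h1
    rw [div_lt_one (by exact_mod_cast β.pos)] at h
    exact_mod_cast h
  refine ⟨β.num.natAbs, β.den - β.num.natAbs, Rat.natAbs_num_pos h0, by omega, ?_⟩
  rw [Nat.add_sub_cancel' hlt.le, Rat.natAbs_num_div_den h0.le]

section

variable {G : Type*} [AddCommGroup G]

section RatExtension

def ratExtension (L : ℕ → G) (q : ℚ) : G := L q.den - L q.num.natAbs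

variable {L : ℕ → G} (hL : ∀ m n : ℕ, 0 < m → 0 < n → L (m * n) = L m + L n)
include hL

lemma ratExtension_natCast_div {a b : ℕ} (ha : 0 < a) (hb : 0 < b) :
    ratExtension L (a / b) = L b - L a := by
  set q : ℚ := a / b
  have hq : 0 < q := by positivity
  have hcross : q.num.natAbs * b = a * q.den := by
    have h : (q.num.natAbs : ℚ) / q.den = a / b := Rat.natAbs_num_div_den hq.le
    rw [div_eq_div_iff (by exact_mod_cast q.pos.ne') (by positivity)] at h
    exact_mod_cast h
  have h := congrArg L hcross
  rw [hL _ _ (Rat.natAbs_num_pos hq) hb, hL _ _ ha q.pos] at h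
  rw [ratExtension, sub_eq_sub_iff_add_eq_add, add_comm (L b), h, add_comm]

lemma ratExtension_one_div {n : ℕ} (hn : 0 < n) : ratExtension L (1 / n) = L n := by
  have h1 : L 1 = 0 := by simpa using hL 1 1 one_pos one_pos
  simpa [h1] using ratExtension_natCast_div hL one_pos hn

lemma ratExtension_mul {x y : ℚ} (hx : 0 < x) (hy : 0 < y) :
    ratExtension L (x * y) = ratExtension L x + ratExtension L y := by
  have hxn := Rat.natAbs_num_pos hx
  have hyn := Rat.natAbs_num_pos hy
  have hxy : x * y = ((x.num.natAbs * y.num.natAbs : ℕ) : ℚ) / ((x.den * y.den : ℕ) : ℚ) := by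
    rw [Nat.cast_mul, Nat.cast_mul, ← div_mul_div_comm, Rat.natAbs_num_div_den hx.le,
      Rat.natAbs_num_div_den hy.le]
  rw [hxy, ratExtension_natCast_div hL (Nat.mul_pos hxn hyn) (Nat.mul_pos x.pos y.pos),
    hL _ _ x.pos y.pos, hL _ _ hxn hyn, ratExtension, ratExtension]
  abel

end RatExtension

section MapMulEqAdd

variable {f : ℚ → G} (hf : ∀ a b : ℚ, 0 < a → 0 < b → f (a * b) = f a + f b)
include hf

lemma map_one_of_map_mul_eq_add : f 1 = 0 := by
  simpa using hf 1 1 one_pos one_pos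

lemma eq_ratExtension_of_map_mul_eq_add {q : ℚ} (hq : 0 < q) :
    f q = ratExtension (fun n => f (1 / n)) q := by
  have hn : (0 : ℚ) < q.num.natAbs := by exact_mod_cast Rat.natAbs_num_pos hq
  have h : q * (1 / q.num.natAbs) = 1 / q.den :=
    calc q * (1 / q.num.natAbs) = q.num.natAbs / q.den * (1 / q.num.natAbs) := by
          rw [Rat.natAbs_num_div_den hq.le]
      _ = 1 / q.den := by field_simp
  have hsplit := hf q (1 / q.num.natAbs) hq (by positivity)
  rw [h] at hsplit
  simp only [ratExtension]
  rw [hsplit]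
  abel

lemma eqOn_of_map_mul_eq_add {g : ℚ → G}
    (hg : ∀ a b : ℚ, 0 < a → 0 < b → g (a * b) = g a + g b)
    (h : ∀ n : ℕ, 2 ≤ n → f (1 / n) = g (1 / n)) {q : ℚ} (hq : 0 < q) : f q = g q := by
  have h' : ∀ n : ℕ, 0 < n → f (1 / n) = g (1 / n) := by
    rintro (_ | _ | n) hn
    · omega
    · simp [map_one_of_map_mul_eq_add hf, map_one_of_map_mul_eq_add hg]
    · exact h _ (by omega)
  rw [eq_ratExtension_of_map_mul_eq_add hf hq, eq_ratExtension_of_map_mul_eq_add hg hq]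
  simp only [ratExtension]
  rw [h' _ q.pos, h' _ (Rat.natAbs_num_pos hq)]

end MapMulEqAdd

section InformationFunction

variable [Module ℚ G] (w : ℚ → G)

def homogenize (x y : ℚ) : G := (x + y) • w (x / (x + y))

lemma homogenize_smul (t x y : ℚ) : homogenize w (t * x) (t * y) = t • homogenize w x y := by
  rcases eq_or_ne t 0 with rfl | ht
  · simp [homogenize]
  · simp only [homogenize, ← mul_add, mul_div_mul_left _ _ ht, mul_smul]

def uniformSum (n : ℕ) : G := ∑ j ∈ Icc 2 n, (j : ℚ) • w (1 / j)

def uniformEntropy (n : ℕ) : G := ∑ j ∈ Icc 2 n, ((j : ℚ) / n) • w (1 / j)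

lemma natCast_smul_uniformEntropy (n : ℕ) (hn : 0 < n) :
    (n : ℚ) • uniformEntropy w n = uniformSum w n := by
  have hn' : (n : ℚ) ≠ 0 := by positivity
  simp only [uniformEntropy, uniformSum, smul_sum, smul_smul, mul_div_cancel₀ _ hn']

lemma uniformSum_one : uniformSum w 1 = 0 := by simp [uniformSum]

lemma uniformSum_succ {n : ℕ} (hn : 0 < n) :
    uniformSum w (n + 1) = uniformSum w n + homogenize w 1 n := by
  simp only [uniformSum, sum_Icc_succ_top (by omega : 2 ≤ n + 1), homogenize]
  push_cast
  rw [add_comm (n : ℚ)]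

variable {w}
variable (hassoc : ∀ α β : ℚ, 0 < α → α < 1 → 0 < β → β < 1 →
      w α + α • w β = w (α * β) + (1 - α * β) • w (α * (1 - β) / (1 - α * β)))
include hassoc

lemma homogenize_cocycle {x y z : ℚ} (hx : 0 < x) (hy : 0 < y) (hz : 0 < z) :
    homogenize w (x + y) z + homogenize w x y = homogenize w x (y + z) + homogenize w y z := by
  have hN : 0 < x + y + z := by positivity
  have hA := hassoc ((x + y) / (x + y + z)) (x / (x + y)) (by positivity)
    (by rw [div_lt_one hN]; linarith) (by positivity) (by rw [div_lt_one (by positivity)]; linarith)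
  have e1 : (x + y) / (x + y + z) * (x / (x + y)) = x / (x + (y + z)) := by
    field_simp; ring
  have e2 : 1 - x / (x + (y + z)) = (y + z) / (x + y + z) := by
    field_simp; ring
  have e3 : (x + y) / (x + y + z) * (1 - x / (x + y)) / ((y + z) / (x + y + z)) = y / (y + z) := by
    field_simp; ring
  rw [e1, e2, e3] at hA
  unfold homogenize
  linear_combination (norm := skip) (x + y + z) • hA
  match_scalars <;> field_simp <;> ring

lemma uniformSum_add {p q : ℕ} (hp : 0 < p) (hq : 0 < q) :
    uniformSum w (p + q) = uniformSum w p + uniformSum w q + homogenize w p q := by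
  induction p, hp using Nat.le_induction with
  | base =>
    rw [add_comm, uniformSum_succ w hq, uniformSum_one]
    push_cast
    abel
  | succ p hp ih =>
    have hcocycle := homogenize_cocycle hassoc one_pos (Nat.cast_pos.mpr hp) (Nat.cast_pos.mpr hq)
    rw [add_right_comm, uniformSum_succ w (by omega), ih, uniformSum_succ w hp]
    push_cast
    rw [add_comm 1 (p : ℚ)] at hcocycle
    linear_combination (norm := module) -hcocycle

lemma uniformSum_mul {m n : ℕ} (hm : 0 < m) (hn : 0 < n) :
    uniformSum w (m * n) = (m : ℚ) • uniformSum w n + (n : ℚ) • uniformSum w m := by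
  induction m, hm using Nat.le_induction with
  | base => simp [uniformSum_one]
  | succ m hm ih =>
    have hscale : homogenize w n (m * n : ℕ) = (n : ℚ) • homogenize w 1 m := by
      rw [← homogenize_smul, mul_one, Nat.cast_mul, mul_comm]
    rw [show (m + 1) * n = n + m * n by ring, uniformSum_add hassoc hn (Nat.mul_pos hm hn), ih,
      hscale, uniformSum_succ w hm]
    push_cast
    module

lemma uniformEntropy_mul (m n : ℕ) (hm : 0 < m) (hn : 0 < n) :
    uniformEntropy w (m * n) = uniformEntropy w m + uniformEntropy w n := by
  have hmn : ((m * n : ℕ) : ℚ) ≠ 0 := by positivity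
  apply smul_right_injective G hmn
  dsimp only
  rw [natCast_smul_uniformEntropy w _ (Nat.mul_pos hm hn), uniformSum_mul hassoc hm hn,
    ← natCast_smul_uniformEntropy w m hm, ← natCast_smul_uniformEntropy w n hn]
  push_cast
  module

lemma eq_smul_ratExtension_add_smul {β : ℚ} (h0 : 0 < β) (h1 : β < 1) :
    w β = β • ratExtension (uniformEntropy w) β
      + (1 - β) • ratExtension (uniformEntropy w) (1 - β) := by
  obtain ⟨p, r, hp, hr, rfl⟩ := Rat.exists_eq_natCast_div_add h0 h1
  have hpr : 0 < p + r := by omega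
  have hsum := uniformSum_add hassoc hp hr
  rw [← natCast_smul_uniformEntropy w _ hpr, ← natCast_smul_uniformEntropy w _ hp,
    ← natCast_smul_uniformEntropy w _ hr, homogenize] at hsum
  have h1β : 1 - (p : ℚ) / (p + r : ℕ) = r / (p + r : ℕ) := by
    field_simp
    push_cast
    ring
  rw [h1β, ratExtension_natCast_div (uniformEntropy_mul hassoc) hp hpr,
    ratExtension_natCast_div (uniformEntropy_mul hassoc) hr hpr]
  push_cast at hsum ⊢
  have hpr' : (p : ℚ) + r ≠ 0 := by positivity
  linear_combination (norm := skip) (-((p : ℚ) + r)⁻¹) • hsum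
  match_scalars <;> field_simp <;> ring

end InformationFunction

end

theorem solutions_are_entropy_form_general {G : Type*} [AddCommGroup G] [Module ℚ G]
    (w : ℚ → G)
    (hassoc : ∀ α β : ℚ, 0 < α → α < 1 → 0 < β → β < 1 →
      w α + α • w β =
        w (α * β) + (1 - α * β) • w (α * (1 - β) / (1 - α * β))) :
    ∃ χ : ℚ → G,
      (∀ a b : ℚ, 0 < a → 0 < b → χ (a * b) = χ a + χ b) ∧
      (∀ n : ℕ, 2 ≤ n →
        χ (1 / n) = ∑ j ∈ Finset.Icc 2 n, ((j : ℚ) / n) • w (1 / j)) ∧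
      (∀ β : ℚ, 0 < β → β < 1 → w β = β • χ β + (1 - β) • χ (1 - β)) ∧
      (∀ χ' : ℚ → G,
        (∀ a b : ℚ, 0 < a → 0 < b → χ' (a * b) = χ' a + χ' b) →
        (∀ n : ℕ, 2 ≤ n →
          χ' (1 / n) = ∑ j ∈ Finset.Icc 2 n, ((j : ℚ) / n) • w (1 / j)) →
        (∀ β : ℚ, 0 < β → β < 1 → w β = β • χ' β + (1 - β) • χ' (1 - β)) →
        ∀ q : ℚ, 0 < q → χ' q = χ q) := by
  have hL := uniformEntropy_mul hassoc
  have hmul : ∀ a b : ℚ, 0 < a → 0 < b → ratExtension (uniformEntropy w) (a * b) =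
      ratExtension (uniformEntropy w) a + ratExtension (uniformEntropy w) b :=
    fun _ _ ha hb => ratExtension_mul hL ha hb
  have hval : ∀ n : ℕ, 2 ≤ n → ratExtension (uniformEntropy w) (1 / n) =
      ∑ j ∈ Finset.Icc 2 n, ((j : ℚ) / n) • w (1 / j) :=
    fun _ hn => ratExtension_one_div hL (by omega)
  refine ⟨ratExtension (uniformEntropy w), hmul, hval,
    fun _ h0 h1 => eq_smul_ratExtension_add_smul hassoc h0 h1, ?_⟩
  intro χ' hmul' hval' _ q hq
  exact eqOn_of_map_mul_eq_add hmul' hmul (fun n hn => (hval' n hn).trans (hval n hn).symm) hq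

/-- Writing the uniquely divisible abelian group `G` additively (as a
`ℚ`-vector space, `g^α` being `α • g`): if `w : ℚ ∩ (0,1) → G` satisfies the
symmetry `w(1-α) = w(α)` and the associativity functional equation, then there
is a homomorphism `χ` from the multiplicative group of positive rationals to
`G`, unique on the positive rationals, with
`χ(1/n) = w⁽ⁿ⁾(1/n, …, 1/n) = ∑_{j=2}^n (j/n) • w(1/j)` and
`w(β) = β • χ(β) + (1-β) • χ(1-β)` for all `β ∈ ℚ ∩ (0,1)`. -/
theorem solutions_are_entropy_form {G : Type*} [AddCommGroup G] [Module ℚ G]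
    (w : ℚ → G)
    (hsym : ∀ α : ℚ, 0 < α → α < 1 → w (1 - α) = w α)
    (hassoc : ∀ α β : ℚ, 0 < α → α < 1 → 0 < β → β < 1 →
      w α + α • w β =
        w (α * β) + (1 - α * β) • w (α * (1 - β) / (1 - α * β))) :
    ∃ χ : ℚ → G,
      (∀ a b : ℚ, 0 < a → 0 < b → χ (a * b) = χ a + χ b) ∧
      (∀ n : ℕ, 2 ≤ n →
        χ (1 / n) = ∑ j ∈ Finset.Icc 2 n, ((j : ℚ) / n) • w (1 / j)) ∧
      (∀ β : ℚ, 0 < β → β < 1 → w β = β • χ β + (1 - β) • χ (1 - β)) ∧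
      (∀ χ' : ℚ → G,
        (∀ a b : ℚ, 0 < a → 0 < b → χ' (a * b) = χ' a + χ' b) →
        (∀ n : ℕ, 2 ≤ n →
          χ' (1 / n) = ∑ j ∈ Finset.Icc 2 n, ((j : ℚ) / n) • w (1 / j)) →
        (∀ β : ℚ, 0 < β → β < 1 → w β = β • χ' β + (1 - β) • χ' (1 - β)) →
        ∀ q : ℚ, 0 < q → χ' q = χ q) :=
  solutions_are_entropy_form_general w hassoc
end

section
/- Suppose s : ℚ∩(0,1) → E, with E = ℝ, satisfies s(α) = α L(α) + (1-α) L(1-α) ≥ 0 for a function L with L(αβ) = L(α) + L(β) (L a homomorphism from (ℚ₊*, ×) to (ℝ, +)) and L(1/n) ≥ 0 for all n ∈ ℕ. Then there exists λ ≥ 0 with L(α) = -λ log α for all α ∈ ℚ₊*, and hence s(α) = λ·(-α log α - (1-α) log(1-α)). -/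
set_option maxHeartbeats 1000000

lemma pfe_log_comb_ne (p q : ℕ) (hp : p.Prime) (hq : q.Prime) (hne : p ≠ q)
    (a b : ℤ) (ha : a ≠ 0) : a * Real.log p + b * Real.log q ≠ 0 := by
  intro h
  have hp1 : (1:ℝ) < p := by exact_mod_cast hp.one_lt
  have hq1 : (1:ℝ) < q := by exact_mod_cast hq.one_lt
  have hlp : 0 < Real.log p := Real.log_pos hp1
  have hlq : 0 < Real.log q := Real.log_pos hq1
  have helper : ∀ m k : ℕ, 1 ≤ m → (m:ℝ) * Real.log p = (k:ℝ) * Real.log q → False := by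
    intro m k hm heq
    have h1 : Real.log ((p:ℝ)^m) = Real.log ((q:ℝ)^k) := by
      rw [Real.log_pow, Real.log_pow]; exact_mod_cast heq
    have h2 : ((p:ℝ))^m = ((q:ℝ))^k := by
      have hppos : (0:ℝ) < (p:ℝ)^m := by positivity
      have hqpos : (0:ℝ) < (q:ℝ)^k := by positivity
      rw [← Real.exp_log hppos, ← Real.exp_log hqpos, h1]
    have h3 : p^m = q^k := by exact_mod_cast h2
    have h4 : p ∣ q^k := h3 ▸ dvd_pow_self p (by omega)
    exact hne ((Nat.prime_dvd_prime_iff_eq hp hq).mp (hp.dvd_of_dvd_pow h4))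
  rcases ha.lt_or_gt with hneg | hpos
  · have ha' : (1:ℝ) ≤ -(a:ℝ) := by
      have h' : (1:ℤ) ≤ -a := by omega
      exact_mod_cast h'
    have hb : (0:ℝ) < b := by nlinarith
    have hb' : (1:ℝ) ≤ b := by exact_mod_cast (show (1:ℤ) ≤ b by exact_mod_cast hb)
    refine helper (-a).toNat b.toNat ?_ ?_
    · omega
    · have e1 : ((-a).toNat : ℝ) = -(a:ℝ) := by
        rw [show ((-a).toNat : ℝ) = ((-a).toNat : ℤ) by push_cast; ring, Int.toNat_of_nonneg (by omega)]
        push_cast; ring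
      have e2 : (b.toNat : ℝ) = (b:ℝ) := by
        rw [show (b.toNat : ℝ) = (b.toNat : ℤ) by push_cast; ring, Int.toNat_of_nonneg (by exact_mod_cast hb.le)]
      rw [e1, e2]; linarith
  · have ha' : (1:ℝ) ≤ (a:ℝ) := by exact_mod_cast hpos
    have hb : (b:ℝ) < 0 := by nlinarith
    refine helper a.toNat (-b).toNat ?_ ?_
    · omega
    · have e1 : (a.toNat : ℝ) = (a:ℝ) := by
        rw [show (a.toNat : ℝ) = (a.toNat : ℤ) by push_cast; ring, Int.toNat_of_nonneg hpos.le]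
      have e2 : ((-b).toNat : ℝ) = -(b:ℝ) := by
        have hb' : b < 0 := by exact_mod_cast hb
        rw [show ((-b).toNat : ℝ) = ((-b).toNat : ℤ) by push_cast; ring, Int.toNat_of_nonneg (by omega)]
        push_cast; ring
      rw [e1, e2]; linarith

lemma pfe_toNat_cast (n : ℤ) (h : 0 ≤ n) : ((n.toNat : ℕ) : ℝ) = (n : ℝ) := by
  exact_mod_cast congrArg (Int.cast : ℤ → ℝ) (Int.toNat_of_nonneg h)

lemma pfe_exists_combo (p q : ℕ) (hp : p.Prime) (hq : q.Prime) (hne : p ≠ q)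
    (K : ℕ) (δ : ℝ) (hδ : 0 < δ) :
    ∃ k m : ℕ, K ≤ k ∧ 1 ≤ m ∧ 0 < (k : ℝ) * Real.log q - (m : ℝ) * Real.log p ∧
      (k : ℝ) * Real.log q - (m : ℝ) * Real.log p < δ := by
  have hp1 : (1:ℝ) < p := by exact_mod_cast hp.one_lt
  have hq1 : (1:ℝ) < q := by exact_mod_cast hq.one_lt
  set lp := Real.log p with hlpdef
  set lq := Real.log q with hlqdef
  have hlp : 0 < lp := Real.log_pos hp1
  have hlq : 0 < lq := Real.log_pos hq1
  set δ₀ := min δ (min lp (lq / ((K:ℝ) + 2))) with hδ₀def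
  have hδ₀ : 0 < δ₀ := by
    apply lt_min hδ; apply lt_min hlp; positivity
  have hδ₀δ : δ₀ ≤ δ := min_le_left _ _
  have hδ₀lp : δ₀ ≤ lp := le_trans (min_le_right _ _) (min_le_left _ _)
  have hδ₀K : δ₀ ≤ lq / ((K:ℝ) + 2) := le_trans (min_le_right _ _) (min_le_right _ _)
  have hδ₀lq : δ₀ < lq := by
    refine lt_of_le_of_lt hδ₀K ?_
    rw [div_lt_iff₀ (by positivity)]
    nlinarith
  set S := AddSubgroup.closure ({lq, lp} : Set ℝ) with hSdef
  have hdense : Dense (S : Set ℝ) := by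
    rcases S.dense_or_cyclic with h | ⟨x, hx⟩
    · exact h
    · exfalso
      have h1 : lq ∈ S := AddSubgroup.subset_closure (Set.mem_insert _ _)
      have h2 : lp ∈ S := AddSubgroup.subset_closure (Set.mem_insert_of_mem _ rfl)
      rw [hx, AddSubgroup.mem_closure_singleton] at h1 h2
      obtain ⟨i, hi⟩ := h1
      obtain ⟨j, hj⟩ := h2
      simp only [zsmul_eq_mul] at hi hj
      have hi0 : i ≠ 0 := by
        rintro rfl; simp at hi; rw [hlqdef] at hlq; linarith
      refine pfe_log_comb_ne p q hp hq hne (-i) j ?_ ?_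
      · omega
      · push_cast
        rw [← hlpdef, ← hlqdef, ← hi, ← hj]; ring
  obtain ⟨t, htS, ht⟩ := hdense.exists_mem_open isOpen_Ioo (Set.nonempty_Ioo.mpr hδ₀)
  have htS' : t ∈ AddSubgroup.closure ({lq, lp} : Set ℝ) := htS
  rw [AddSubgroup.mem_closure_pair] at htS'
  obtain ⟨a, b, hab⟩ := htS'
  simp only [zsmul_eq_mul] at hab
  obtain ⟨ht0, htδ⟩ := ht
  have stageA : ∃ (k₀ m₀ : ℕ) (s : ℝ), 1 ≤ k₀ ∧ 1 ≤ m₀ ∧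
      s = (k₀:ℝ) * lp - (m₀:ℝ) * lq ∧ 0 < s ∧ s < δ₀ := by
    rcases le_or_gt a 0 with hA | hA
    · have haneg : a < 0 := by
        rcases hA.lt_or_eq with h | h
        · exact h
        · exfalso
          rw [h] at hab
          simp at hab
          have hb0 : (0:ℝ) < (b:ℝ) := by nlinarith
          have hb1 : (1:ℝ) ≤ (b:ℝ) := by
            have : (1:ℤ) ≤ b := by exact_mod_cast hb0
            exact_mod_cast this
          nlinarith
      have ha1 : (a:ℝ) ≤ -1 := by
        have : a ≤ -1 := by omega
        exact_mod_cast this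
      have hbpos : (0:ℝ) < (b:ℝ) * lp := by nlinarith
      have hb1 : 1 ≤ b := by
        have : (0:ℝ) < (b:ℝ) := by nlinarith
        exact_mod_cast (show (1:ℤ) ≤ b by exact_mod_cast this)
      refine ⟨b.toNat, (-a).toNat, t, by omega, by omega, ?_, ht0, htδ⟩
      rw [pfe_toNat_cast b (by omega), pfe_toNat_cast (-a) (by omega)]
      push_cast
      rw [← hab]; ring
    · have ha1 : (1:ℝ) ≤ (a:ℝ) := by
        have : (1:ℤ) ≤ a := hA
        exact_mod_cast this
      have hbneg : (b:ℝ) < 0 := by nlinarith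
      have hb1 : b ≤ -1 := by
        have : (b:ℤ) < 0 := by exact_mod_cast hbneg
        omega
      set j := ⌊lp / t⌋₊ with hjdef
      have hj1 : 1 ≤ j := Nat.le_floor (by
        rw [Nat.cast_one, le_div_iff₀ ht0]; linarith)
      have hjle : (j:ℝ) * t ≤ lp := by
        have h' := Nat.floor_le (le_of_lt (div_pos hlp ht0))
        calc (j:ℝ) * t ≤ (lp / t) * t := by
              apply mul_le_mul_of_nonneg_right _ ht0.le
              exact_mod_cast h'
          _ = lp := div_mul_cancel₀ _ ht0.ne'
      have hjgt : lp < ((j:ℝ) + 1) * t := by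
        have h' := Nat.lt_floor_add_one (lp / t)
        rw [div_lt_iff₀ ht0] at h'
        exact_mod_cast h'
      set s := lp - (j:ℝ) * t with hsdef
      have hsne : s ≠ 0 := by
        intro h0
        refine pfe_log_comb_ne p q hp hq hne (1 - (j:ℤ) * b) (-((j:ℤ) * a)) ?_ ?_
        · have : (j:ℤ) * b < 0 :=
            mul_neg_of_pos_of_neg (by exact_mod_cast hj1) (by omega)
          omega
        · rw [hsdef, ← hab] at h0
          push_cast
          rw [← hlpdef, ← hlqdef]
          linear_combination h0
      have hspos : 0 < s := lt_of_le_of_ne (by rw [hsdef]; linarith) (Ne.symm hsne)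
      have hslt : s < t := by rw [hsdef]; nlinarith
      refine ⟨1 + j * (-b).toNat, j * a.toNat, s, by omega, ?_, ?_, hspos, lt_trans hslt htδ⟩
      · have h1 : 1 ≤ a.toNat := by omega
        exact Nat.one_le_iff_ne_zero.mpr (by positivity)
      · push_cast
        rw [pfe_toNat_cast (-b) (by omega), pfe_toNat_cast a (by omega)]
        rw [hsdef, ← hab]
        push_cast
        ring
  obtain ⟨k₀, m₀, s, hk₀, hm₀, hseq, hspos, hslt⟩ := stageA
  set j' := ⌊lq / s⌋₊ with hj'def
  have hKlq : ((K:ℝ) + 2) ≤ lq / δ₀ := by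
    rw [le_div_iff₀ hδ₀]
    calc ((K:ℝ) + 2) * δ₀ ≤ ((K:ℝ) + 2) * (lq / ((K:ℝ)+2)) := by
          apply mul_le_mul_of_nonneg_left hδ₀K (by positivity)
      _ = lq := by field_simp
  have hj'K : K + 1 ≤ j' := Nat.le_floor (by
    push_cast
    have : lq / δ₀ ≤ lq / s := by
      apply div_le_div_of_nonneg_left hlq.le hspos hslt.le
    linarith)
  have hj'1 : 1 ≤ j' := by omega
  have hj'le : (j':ℝ) * s ≤ lq := by
    have h' := Nat.floor_le (le_of_lt (div_pos hlq hspos))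
    calc (j':ℝ) * s ≤ (lq / s) * s := by
          apply mul_le_mul_of_nonneg_right _ hspos.le
          exact_mod_cast h'
      _ = lq := div_mul_cancel₀ _ hspos.ne'
  have hj'gt : lq < ((j':ℝ) + 1) * s := by
    have h' := Nat.lt_floor_add_one (lq / s)
    rw [div_lt_iff₀ hspos] at h'
    exact_mod_cast h'
  set v := lq - (j':ℝ) * s with hvdef
  have hvne : v ≠ 0 := by
    intro h0
    refine pfe_log_comb_ne p q hp hq hne (-((j':ℤ) * k₀)) (1 + (j':ℤ) * m₀) ?_ ?_
    · have h1 : (1:ℤ) ≤ (j':ℤ) * k₀ := by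
        have := one_le_mul_of_one_le_of_one_le (by exact_mod_cast hj'1 : (1:ℤ) ≤ (j':ℤ))
          (by exact_mod_cast hk₀ : (1:ℤ) ≤ (k₀:ℤ))
        exact this
      omega
    · rw [hvdef, hseq] at h0
      push_cast
      rw [← hlpdef, ← hlqdef]
      linear_combination h0
  have hvpos : 0 < v := lt_of_le_of_ne (by rw [hvdef]; linarith) (Ne.symm hvne)
  have hvlt : v < s := by rw [hvdef]; nlinarith
  refine ⟨1 + j' * m₀, j' * k₀, ?_, ?_, ?_, ?_⟩
  · have : j' ≤ j' * m₀ := Nat.le_mul_of_pos_right _ (by omega)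
    omega
  · have : 1 ≤ j' * k₀ := Nat.one_le_iff_ne_zero.mpr (by positivity)
    omega
  · have he : ((1 + j' * m₀ : ℕ):ℝ) * lq - ((j' * k₀ : ℕ):ℝ) * lp = v := by
      rw [hvdef, hseq]; push_cast; ring
    rw [he]; exact hvpos
  · have he : ((1 + j' * m₀ : ℕ):ℝ) * lq - ((j' * k₀ : ℕ):ℝ) * lp = v := by
      rw [hvdef, hseq]; push_cast; ring
    rw [he]
    calc v < s := hvlt
      _ < δ₀ := hslt
      _ ≤ δ := hδ₀δ

section pfeAux
variable (L : ℚ → ℝ)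
  (hL : ∀ a b : ℚ, 0 < a → 0 < b → L (a * b) = L a + L b)
  (hLn : ∀ n : ℕ, 1 ≤ n → 0 ≤ L (1 / n))
  (hs : ∀ α : ℚ, 0 < α → α < 1 →
      0 ≤ (α : ℝ) * L α + (1 - (α : ℝ)) * L (1 - α))

include hL in
lemma pfe_L_one : L 1 = 0 := by
  have := hL 1 1 one_pos one_pos
  simp at this
  linarith

include hL in
lemma pfe_L_pow (x : ℚ) (hx : 0 < x) : ∀ n : ℕ, L (x ^ n) = n * L x := by
  intro n
  induction n with
  | zero => simp [pfe_L_one L hL]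
  | succ n ih =>
    rw [pow_succ, hL _ _ (by positivity) hx, ih]
    push_cast; ring

include hL in
lemma pfe_L_div (x y : ℚ) (hx : 0 < x) (hy : 0 < y) : L (x / y) = L x - L y := by
  have h := hL (x / y) y (by positivity) hy
  rw [div_mul_cancel₀ _ hy.ne'] at h
  linarith

include hL hLn in
lemma pfe_L_nat_nonneg (n : ℕ) (hn : 1 ≤ n) : 0 ≤ -L (n : ℚ) := by
  have h1 := hLn n hn
  have hn0 : (0:ℚ) < (n:ℚ) := by exact_mod_cast hn
  rw [pfe_L_div L hL 1 n one_pos hn0, pfe_L_one L hL] at h1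
  linarith

lemma pfe_arith (β ra rb U V W : ℝ) (hra : 0 < ra) (hrb : ra < rb)
    (hβ : β * rb = ra) (h0 : 0 ≤ β * (U - W) + (1 - β) * (V - W)) (hV : 0 ≤ -V) :
    ra * (-U) ≤ rb * (-W) := by
  have hb : 0 < rb := lt_trans hra hrb
  have e : (β * rb - ra) * (U - V) = 0 := by rw [hβ]; ring
  have h2 : 0 ≤ ra * (U - W) + (rb - ra) * (V - W) := by
    nlinarith [mul_nonneg hb.le h0, e]
  nlinarith [h2, mul_nonneg (sub_nonneg.mpr hrb.le) hV]

include hL hLn hs in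
lemma pfe_mono (a b : ℕ) (ha : 1 ≤ a) (hab : a ≤ b) :
    (a : ℝ) * (-L (a:ℚ)) ≤ (b : ℝ) * (-L (b:ℚ)) := by
  rcases eq_or_lt_of_le hab with rfl | hlt
  · exact le_refl _
  · have hb1 : 1 ≤ b := le_trans ha hab
    have hba : 1 ≤ b - a := by omega
    have hb0 : (0:ℚ) < (b:ℚ) := by exact_mod_cast hb1
    have ha0 : (0:ℚ) < (a:ℚ) := by exact_mod_cast ha
    have hd0 : (0:ℚ) < ((b - a : ℕ):ℚ) := by exact_mod_cast hba
    have hα0 : 0 < (a:ℚ) / (b:ℚ) := by positivity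
    have hα1 : (a:ℚ) / (b:ℚ) < 1 := by
      rw [div_lt_one hb0]
      exact_mod_cast hlt
    have h0 := hs ((a:ℚ)/(b:ℚ)) hα0 hα1
    have h1α : 1 - (a:ℚ)/(b:ℚ) = ((b - a : ℕ):ℚ)/(b:ℚ) := by
      rw [Nat.cast_sub hab]
      field_simp
    rw [h1α, pfe_L_div L hL _ _ ha0 hb0, pfe_L_div L hL _ _ hd0 hb0] at h0
    have haR : (0:ℝ) < (a:ℝ) := by exact_mod_cast ha
    have habR : (a:ℝ) < (b:ℝ) := by exact_mod_cast hlt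
    have hbR : (0:ℝ) < (b:ℝ) := lt_trans haR habR
    refine pfe_arith (((a:ℚ)/(b:ℚ) : ℚ) : ℝ) (a:ℝ) (b:ℝ) (L (a:ℚ)) (L ((b-a:ℕ):ℚ))
      (L (b:ℚ)) haR habR ?_ ?_ ?_
    · push_cast
      field_simp
    · exact h0
    · exact pfe_L_nat_nonneg L hL hLn (b - a) hba

set_option maxHeartbeats 2000000 in
include hL hLn hs in
lemma pfe_ratio (p q : ℕ) (hp : p.Prime) (hq : q.Prime) (hne : p ≠ q) :
    (-L (p:ℚ)) * Real.log q ≤ (-L (q:ℚ)) * Real.log p := by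
  have hp1R : (1:ℝ) < p := by exact_mod_cast hp.one_lt
  have hq1R : (1:ℝ) < q := by exact_mod_cast hq.one_lt
  have hlp : 0 < Real.log (p:ℝ) := Real.log_pos hp1R
  have hlq : 0 < Real.log (q:ℝ) := Real.log_pos hq1R
  have hfp : 0 ≤ -L (p:ℚ) := pfe_L_nat_nonneg L hL hLn p hp.one_lt.le
  have hfq : 0 ≤ -L (q:ℚ) := pfe_L_nat_nonneg L hL hLn q hq.one_lt.le
  apply le_of_forall_pos_le_add
  intro c hc
  have hden : (0:ℝ) < 2 * (-L (q:ℚ) + 1) * Real.log (p:ℝ) := by nlinarith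
  have hargpos : 0 < c / (2 * (-L (q:ℚ) + 1) * Real.log (p:ℝ)) := div_pos hc hden
  obtain ⟨δ, hδpos, hexp⟩ :
      ∃ δ : ℝ, 0 < δ ∧ Real.exp δ = 1 + c / (2 * (-L (q:ℚ) + 1) * Real.log (p:ℝ)) :=
    ⟨Real.log (1 + c / (2 * (-L (q:ℚ) + 1) * Real.log (p:ℝ))),
      Real.log_pos (by linarith), Real.exp_log (by linarith)⟩
  obtain ⟨K, hK1, hKδ⟩ : ∃ K : ℕ, 1 ≤ K ∧ 2 * (-L (p:ℚ)) * δ / c ≤ (K:ℝ) :=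
    ⟨⌈2 * (-L (p:ℚ)) * δ / c⌉₊ + 1, by omega, by
      push_cast
      linarith [Nat.le_ceil (2 * (-L (p:ℚ)) * δ / c)]⟩
  obtain ⟨k, m, hkK, hm1, hpos, hlt⟩ := pfe_exists_combo p q hp hq hne K δ hδpos
  have hk1 : 1 ≤ k := le_trans hK1 hkK
  have hppos : (0:ℝ) < p := by linarith
  have hqpos : (0:ℝ) < q := by linarith
  have hplog : ((p:ℝ))^m = Real.exp ((m:ℝ) * Real.log (p:ℝ)) := by
    rw [Real.exp_nat_mul, Real.exp_log hppos]
  have hqlog : ((q:ℝ))^k = Real.exp ((k:ℝ) * Real.log (q:ℝ)) := by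
    rw [Real.exp_nat_mul, Real.exp_log hqpos]
  have hpmqk : p^m ≤ q^k := by
    have hR : ((p:ℝ))^m ≤ ((q:ℝ))^k := by
      rw [hplog, hqlog]
      exact Real.exp_le_exp.mpr (by linarith)
    have hR' : ((p^m : ℕ):ℝ) ≤ ((q^k : ℕ):ℝ) := by push_cast; exact hR
    exact_mod_cast hR'
  have hmono := pfe_mono L hL hLn hs (p^m) (q^k)
    (Nat.one_le_iff_ne_zero.mpr (pow_ne_zero m hp.pos.ne')) hpmqk
  have hc1 : ((p^m : ℕ):ℚ) = ((p:ℚ))^m := by push_cast; ring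
  have hc2 : ((q^k : ℕ):ℚ) = ((q:ℚ))^k := by push_cast; ring
  have hpQ : (0:ℚ) < (p:ℚ) := by exact_mod_cast hp.pos
  have hqQ : (0:ℚ) < (q:ℚ) := by exact_mod_cast hq.pos
  rw [hc1, hc2, pfe_L_pow L hL (p:ℚ) hpQ m, pfe_L_pow L hL (q:ℚ) hqQ k] at hmono
  have hcast1 : ((p^m : ℕ):ℝ) = Real.exp ((m:ℝ) * Real.log (p:ℝ)) := by push_cast; exact hplog
  have hcast2 : ((q^k : ℕ):ℝ) = Real.exp ((k:ℝ) * Real.log (q:ℝ)) := by push_cast; exact hqlog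
  rw [hcast1, hcast2] at hmono
  have key1 : Real.exp ((m:ℝ) * Real.log (p:ℝ)) * ((m:ℝ) * (-L (p:ℚ)))
      ≤ Real.exp ((k:ℝ) * Real.log (q:ℝ)) * ((k:ℝ) * (-L (q:ℚ))) := by
    nlinarith [hmono]
  have hexpm : 0 < Real.exp ((m:ℝ) * Real.log (p:ℝ)) := Real.exp_pos _
  have key2 : Real.exp ((k:ℝ) * Real.log (q:ℝ))
      ≤ Real.exp ((m:ℝ) * Real.log (p:ℝ)) * Real.exp δ := by
    rw [← Real.exp_add]
    exact Real.exp_le_exp.mpr (by linarith)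
  have hkfq : 0 ≤ (k:ℝ) * (-L (q:ℚ)) := mul_nonneg (by positivity) hfq
  have key3 : (m:ℝ) * (-L (p:ℚ)) ≤ Real.exp δ * ((k:ℝ) * (-L (q:ℚ))) := by
    have h' : Real.exp ((m:ℝ) * Real.log (p:ℝ)) * ((m:ℝ) * (-L (p:ℚ)))
        ≤ Real.exp ((m:ℝ) * Real.log (p:ℝ)) * (Real.exp δ * ((k:ℝ) * (-L (q:ℚ)))) := by
      nlinarith [key1, mul_le_mul_of_nonneg_right key2 hkfq]
    exact le_of_mul_le_mul_left h' hexpm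
  have hmlp : (k:ℝ) * Real.log (q:ℝ) - δ ≤ (m:ℝ) * Real.log (p:ℝ) := by linarith
  have hstep1 : (-L (p:ℚ)) * ((k:ℝ) * Real.log (q:ℝ))
      ≤ (-L (p:ℚ)) * δ + ((m:ℝ) * (-L (p:ℚ))) * Real.log (p:ℝ) := by
    nlinarith [mul_le_mul_of_nonneg_left hmlp hfp]
  have hstep2 : ((m:ℝ) * (-L (p:ℚ))) * Real.log (p:ℝ)
      ≤ (Real.exp δ * ((k:ℝ) * (-L (q:ℚ)))) * Real.log (p:ℝ) :=
    mul_le_mul_of_nonneg_right key3 hlp.le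
  have hk0 : (0:ℝ) < k := by exact_mod_cast hk1
  have hstep3 : (Real.exp δ * ((k:ℝ) * (-L (q:ℚ)))) * Real.log (p:ℝ)
      ≤ (k:ℝ) * ((-L (q:ℚ)) * Real.log (p:ℝ)) + (k:ℝ) * (c / 2) := by
    rw [hexp]
    have hdiv : c / (2 * (-L (q:ℚ) + 1) * Real.log (p:ℝ)) * (-L (q:ℚ)) * Real.log (p:ℝ)
        ≤ c / 2 := by
      rw [div_mul_eq_mul_div, div_mul_eq_mul_div, div_le_div_iff₀ hden (by norm_num)]
      nlinarith
    nlinarith [mul_le_mul_of_nonneg_left hdiv hk0.le]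
  have hstep4 : (-L (p:ℚ)) * δ ≤ (k:ℝ) * (c / 2) := by
    have h2 : (K:ℝ) ≤ (k:ℝ) := by exact_mod_cast hkK
    rw [div_le_iff₀ hc] at hKδ
    nlinarith
  have hfinal : (k:ℝ) * ((-L (p:ℚ)) * Real.log (q:ℝ))
      ≤ (k:ℝ) * ((-L (q:ℚ)) * Real.log (p:ℝ) + c) := by nlinarith
  have := le_of_mul_le_mul_left hfinal hk0
  linarith

end pfeAux

/-- If `L` is a homomorphism from the multiplicative group of positive
rationals to `(ℝ, +)` with `L(1/n) ≥ 0` for all `n ≥ 1`, and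
`s(α) = α L(α) + (1-α) L(1-α) ≥ 0` for all `α ∈ ℚ ∩ (0,1)`, then
`L(α) = -λ log α` for some `λ ≥ 0`, hence
`s(α) = λ (-α log α - (1-α) log(1-α))`. -/
theorem positivity_forces_entropy (L : ℚ → ℝ)
    (hL : ∀ a b : ℚ, 0 < a → 0 < b → L (a * b) = L a + L b)
    (hLn : ∀ n : ℕ, 1 ≤ n → 0 ≤ L (1 / n))
    (hs : ∀ α : ℚ, 0 < α → α < 1 →
      0 ≤ (α : ℝ) * L α + (1 - (α : ℝ)) * L (1 - α)) :
    ∃ l : ℝ, 0 ≤ l ∧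
      (∀ q : ℚ, 0 < q → L q = -l * Real.log (q : ℝ)) ∧
      (∀ α : ℚ, 0 < α → α < 1 →
        (α : ℝ) * L α + (1 - (α : ℝ)) * L (1 - α) =
          l * (-(α : ℝ) * Real.log (α : ℝ) -
            (1 - (α : ℝ)) * Real.log (1 - (α : ℝ)))) := by
  have h2p : Nat.Prime 2 := Nat.prime_two
  have hc2R : (((2:ℕ):ℝ)) = (2:ℝ) := by norm_num
  have hl2 : (0:ℝ) < Real.log ((2:ℕ):ℝ) := by rw [hc2R]; exact Real.log_pos (by norm_num)
  set lam := (-L ((2:ℕ):ℚ)) / Real.log ((2:ℕ):ℝ) with hlamdef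
  have lamnonneg : 0 ≤ lam :=
    div_nonneg (pfe_L_nat_nonneg L hL hLn 2 (by norm_num)) hl2.le
  have hprime : ∀ p : ℕ, p.Prime → -L (p:ℚ) = lam * Real.log (p:ℝ) := by
    intro p hp
    by_cases hp2 : p = 2
    · subst hp2
      rw [hlamdef, div_mul_cancel₀ _ hl2.ne']
    · have h1 := pfe_ratio L hL hLn hs p 2 hp h2p hp2
      have h2 := pfe_ratio L hL hLn hs 2 p h2p hp (Ne.symm hp2)
      have heq : (-L (p:ℚ)) * Real.log ((2:ℕ):ℝ) = (-L ((2:ℕ):ℚ)) * Real.log (p:ℝ) :=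
        le_antisymm h1 h2
      rw [hlamdef, div_mul_eq_mul_div, eq_div_iff hl2.ne']
      linarith
  have hnat : ∀ n : ℕ, 1 ≤ n → L (n:ℚ) = -lam * Real.log (n:ℝ) := by
    intro n
    induction n using Nat.recOnMul with
    | zero => intro h; omega
    | one => intro _; simp [pfe_L_one L hL]
    | prime p hpp =>
      intro _
      have := hprime p hpp
      linarith
    | mul a b ha hb =>
      intro hab
      have ha0 : a ≠ 0 := by rintro rfl; simp at hab
      have hb0 : b ≠ 0 := by rintro rfl; simp at hab
      have ha1 : 1 ≤ a := by omega
      have hb1 : 1 ≤ b := by omega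
      have haQ : (0:ℚ) < (a:ℚ) := by exact_mod_cast ha1
      have hbQ : (0:ℚ) < (b:ℚ) := by exact_mod_cast hb1
      have haR : ((a:ℕ):ℝ) ≠ 0 := by positivity
      have hbR : ((b:ℕ):ℝ) ≠ 0 := by positivity
      rw [Nat.cast_mul, hL _ _ haQ hbQ, ha ha1, hb hb1, Nat.cast_mul,
        Real.log_mul haR hbR]
      ring
  have hratq : ∀ r : ℚ, 0 < r → L r = -lam * Real.log (r:ℝ) := by
    intro r hr
    have hnum : 0 < r.num := Rat.num_pos.mpr hr
    have hden1 : 1 ≤ r.den := r.den_pos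
    have hdenQ : (0:ℚ) < (r.den:ℚ) := by exact_mod_cast hden1
    have hnum' : ((r.num.toNat : ℕ):ℚ) = (r.num:ℚ) := by
      exact_mod_cast congrArg (Int.cast : ℤ → ℚ) (Int.toNat_of_nonneg hnum.le)
    have hrden : r * (r.den:ℚ) = ((r.num.toNat:ℕ):ℚ) := by
      rw [hnum']; exact_mod_cast Rat.mul_den_eq_num r
    have h1 := hL r (r.den:ℚ) hr hdenQ
    rw [hrden] at h1
    have h2 := hnat r.num.toNat (by omega)
    have h3 := hnat r.den hden1
    have hnumR : ((r.num.toNat:ℕ):ℝ) = (r.num:ℝ) := pfe_toNat_cast r.num hnum.le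
    have hnumR0 : (r.num:ℝ) ≠ 0 := by
      have : (0:ℝ) < (r.num:ℝ) := by exact_mod_cast hnum
      linarith
    have hdenR0 : ((r.den:ℕ):ℝ) ≠ 0 := by positivity
    have hlogr : Real.log (r:ℝ) =
        Real.log ((r.num.toNat:ℕ):ℝ) - Real.log ((r.den:ℕ):ℝ) := by
      rw [Rat.cast_def, Real.log_div hnumR0 hdenR0, hnumR]
    rw [hlogr]
    linarith [h1, h2, h3]
  refine ⟨lam, lamnonneg, hratq, ?_⟩
  intro α h0 h1
  have h1α : (0:ℚ) < 1 - α := by linarith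
  have hcast : ((1 - α : ℚ):ℝ) = 1 - (α:ℝ) := by push_cast; ring
  rw [hratq α h0, hratq (1 - α) h1α, hcast]
  ring
end
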